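/- arXiv:0704.0398 — 2 statements merged into one kernel-verified Lean document; each statement's English description precedes it below -/
import Mathlib

section
/- Let X and Y be independent real random variables, where X has density f_X bounded by M and Y is integrable. Then the Kolmogorov–Smirnov distance between the laws of X and X + Y satisfies d_KS(X, X+Y) ≤ M · E|Y|. -/
open MeasureTheory ProbabilityTheory

/-- If `X` and `Y` are independent, `X` has a density bounded by `M`, and `Y` is integrable,
then `d_KS(X, X + Y) ≤ M · E|Y|`. -/
theorem stmt5 {Ω : Type*} [MeasureSpace Ω] [IsProbabilityMeasure (ℙ : Measure Ω)]
    (X Y : Ω → ℝ) (hX : Measurable X) (hYm : Measurable Y)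
    (hindep : IndepFun X Y ℙ)
    (f : ℝ → ℝ) (hf : Measurable f) (M : ℝ)
    (hdensity : Measure.map X ℙ = volume.withDensity (fun x => ENNReal.ofReal (f x)))
    (hbound : ∀ x, f x ≤ M)
    (hint : Integrable Y ℙ) :
    ∀ z : ℝ, |(ℙ {ω | X ω + Y ω ≤ z}).toReal - (ℙ {ω | X ω ≤ z}).toReal|
      ≤ M * ∫ ω, |Y ω| ∂ℙ := by
  intro z
  set μX := Measure.map X ℙ with hμX
  set μY := Measure.map Y ℙ with hμY
  have hXpm : IsProbabilityMeasure μX := Measure.isProbabilityMeasure_map hX.aemeasurable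
  have hYpm : IsProbabilityMeasure μY := Measure.isProbabilityMeasure_map hYm.aemeasurable
  -- M is nonnegative
  have hM : 0 ≤ M := by
    by_contra h
    push_neg at h
    have h0 : μX Set.univ = 0 := by
      rw [hdensity, withDensity_apply _ MeasurableSet.univ]
      have hz : ∀ x, ENNReal.ofReal (f x) = 0 := fun x =>
        ENNReal.ofReal_eq_zero.mpr ((hbound x).trans h.le)
      simp [hz]
    have := measure_univ (μ := μX)
    rw [h0] at this
    exact zero_ne_one this
  -- the CDF of X
  set F : ℝ → ℝ := fun t => (μX (Set.Iic t)).toReal with hFdef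
  have hFmono : Monotone F := fun a b hab =>
    ENNReal.toReal_mono (measure_ne_top _ _)
      (measure_mono (Set.Iic_subset_Iic.mpr hab))
  have hFmeas : Measurable F := hFmono.measurable
  have hF0 : ∀ t, 0 ≤ F t := fun t => ENNReal.toReal_nonneg
  have hF1 : ∀ t, F t ≤ 1 := fun t => by
    have := prob_le_one (μ := μX) (s := Set.Iic t)
    simpa [hFdef] using ENNReal.toReal_mono ENNReal.one_ne_top this
  -- Lipschitz bound for F
  have hstep : ∀ a b : ℝ, a ≤ b → F b - F a ≤ M * (b - a) := by
    intro a b hab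
    have hsplit : μX (Set.Iic b) = μX (Set.Iic a) + μX (Set.Ioc a b) := by
      rw [← Set.Iic_union_Ioc_eq_Iic hab,
        measure_union (Set.Iic_disjoint_Ioc le_rfl) measurableSet_Ioc]
    have hbd : μX (Set.Ioc a b) ≤ ENNReal.ofReal (M * (b - a)) := by
      rw [hdensity, withDensity_apply _ measurableSet_Ioc]
      calc ∫⁻ x in Set.Ioc a b, ENNReal.ofReal (f x) ∂volume
          ≤ ∫⁻ _ in Set.Ioc a b, ENNReal.ofReal M ∂volume :=
            lintegral_mono fun x => ENNReal.ofReal_le_ofReal (hbound x)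
        _ = ENNReal.ofReal M * volume (Set.Ioc a b) := by
            rw [setLIntegral_const]
        _ = ENNReal.ofReal (M * (b - a)) := by
            rw [Real.volume_Ioc, ← ENNReal.ofReal_mul hM]
    have h1 : F b - F a = (μX (Set.Ioc a b)).toReal := by
      rw [hFdef]
      simp only
      rw [hsplit, ENNReal.toReal_add (measure_ne_top _ _) (measure_ne_top _ _)]
      ring
    rw [h1]
    calc (μX (Set.Ioc a b)).toReal
        ≤ (ENNReal.ofReal (M * (b - a))).toReal :=
          ENNReal.toReal_mono ENNReal.ofReal_ne_top hbd
      _ = M * (b - a) := ENNReal.toReal_ofReal (mul_nonneg hM (sub_nonneg.mpr hab))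
  have hlip : ∀ a b : ℝ, |F b - F a| ≤ M * |b - a| := by
    intro a b
    rcases le_total a b with hab | hab
    · rw [abs_of_nonneg (sub_nonneg.mpr (hFmono hab)), abs_of_nonneg (sub_nonneg.mpr hab)]
      exact hstep a b hab
    · rw [abs_sub_comm, abs_sub_comm b a,
        abs_of_nonneg (sub_nonneg.mpr (hFmono hab)), abs_of_nonneg (sub_nonneg.mpr hab)]
      exact hstep b a hab
  -- identity: P(X + Y ≤ z) as an integral
  have hmap : Measure.map (fun ω => (X ω, Y ω)) ℙ = μX.prod μY :=
    (indepFun_iff_map_prod_eq_prod_map_map hX.aemeasurable hYm.aemeasurable).mp hindep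
  have hsmeas : MeasurableSet {p : ℝ × ℝ | p.1 + p.2 ≤ z} :=
    measurableSet_le (measurable_fst.add measurable_snd) measurable_const
  have h1 : ℙ {ω | X ω + Y ω ≤ z} = ∫⁻ y, ENNReal.ofReal (F (z - y)) ∂μY := by
    have e1 : ℙ {ω | X ω + Y ω ≤ z}
        = Measure.map (fun ω => (X ω, Y ω)) ℙ {p : ℝ × ℝ | p.1 + p.2 ≤ z} := by
      rw [Measure.map_apply (hX.prodMk hYm) hsmeas]
      rfl
    rw [e1, hmap, Measure.prod_apply_symm hsmeas]
    refine lintegral_congr fun y => ?_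
    have e2 : (fun x => (x, y)) ⁻¹' {p : ℝ × ℝ | p.1 + p.2 ≤ z} = Set.Iic (z - y) := by
      ext x
      simp [le_sub_iff_add_le]
    rw [e2, hFdef]
    exact (ENNReal.ofReal_toReal (measure_ne_top _ _)).symm
  have hgmeas : Measurable fun y : ℝ => F (z - y) :=
    hFmeas.comp (measurable_const.sub measurable_id)
  have h2 : (ℙ {ω | X ω + Y ω ≤ z}).toReal = ∫ ω, F (z - Y ω) ∂ℙ := by
    rw [h1]
    have e3 : ∫ y, F (z - y) ∂μY = (∫⁻ y, ENNReal.ofReal (F (z - y)) ∂μY).toReal :=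
      integral_eq_lintegral_of_nonneg_ae (Filter.Eventually.of_forall fun y => hF0 _)
        hgmeas.aestronglyMeasurable
    rw [← e3, hμY, integral_map hYm.aemeasurable hgmeas.aestronglyMeasurable]
  have h3 : (ℙ {ω | X ω ≤ z}).toReal = F z := by
    rw [hFdef]
    simp only
    congr 1
    rw [hμX, Measure.map_apply hX measurableSet_Iic]
    rfl
  -- integrability
  have hcomp : Measurable fun ω => F (z - Y ω) := hgmeas.comp hYm
  have hIg : Integrable (fun ω => F (z - Y ω)) ℙ := by
    refine (integrable_const (1 : ℝ)).mono' hcomp.aestronglyMeasurable ?_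
    refine Filter.Eventually.of_forall fun ω => ?_
    rw [Real.norm_eq_abs, abs_of_nonneg (hF0 _)]
    exact hF1 _
  have hIh : Integrable (fun ω => F (z - Y ω) - F z) ℙ := hIg.sub (integrable_const _)
  -- conclusion
  rw [h2, h3]
  have e4 : ∫ ω, F (z - Y ω) ∂ℙ - F z = ∫ ω, (F (z - Y ω) - F z) ∂ℙ := by
    rw [integral_sub hIg (integrable_const _), integral_const]
    simp
  rw [e4]
  calc |∫ ω, (F (z - Y ω) - F z) ∂ℙ|
      ≤ ∫ ω, |F (z - Y ω) - F z| ∂ℙ := by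
        simpa [Real.norm_eq_abs] using norm_integral_le_integral_norm (fun ω => F (z - Y ω) - F z)
    _ ≤ ∫ ω, M * |Y ω| ∂ℙ := by
        refine integral_mono hIh.abs (hint.abs.const_mul M) fun ω => ?_
        have := hlip z (z - Y ω)
        simpa [abs_sub_comm] using this
    _ = M * ∫ ω, |Y ω| ∂ℙ := integral_const_mul M _
end

section
/- Let (Z_k)_{k∈ℕ} be i.i.d. random variables with the exponential distribution of rate 1, and S_∞ = ∑_{k=1}^∞ 2^{-k} Z_k. Then for all j ∈ ℕ, P(S_∞ ≤ 2^{-j}) ≤ 2^{-j(j-1)/2}. -/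
/-!
On the event `S_∞ ≤ 2^{-j}` every term is at most the sum, so `Z_k ≤ 2^{k+1-j}` for `k < j`.
By independence and `P(Z ≤ x) = 1 - e^{-x} ≤ x`, the probability is at most
`∏_{k<j} 2^{k+1-j} = 2^{-j(j-1)/2}`. Since `tsum` is `0` on non-summable sequences, this needs the
series to converge almost surely, which follows from its finite expectation.
-/

open MeasureTheory ProbabilityTheory

open Real Set
open scoped ENNReal

namespace ProbabilityTheory

lemma measurable_gammaPDF (a r : ℝ) : Measurable (gammaPDF a r) :=
  (measurable_gammaPDFReal a r).ennreal_ofReal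

lemma ae_nonneg_expMeasure (r : ℝ) : ∀ᵐ x ∂expMeasure r, 0 ≤ x := by
  rw [expMeasure, gammaMeasure, ae_withDensity_iff (measurable_gammaPDF 1 r)]
  exact Filter.Eventually.of_forall fun x hx => not_lt.1 fun hneg => hx (gammaPDF_of_neg hneg)

lemma expMeasure_Iic_le {r : ℝ} (hr : 0 < r) (x : ℝ) :
    expMeasure r (Iic x) ≤ ENNReal.ofReal (r * x) := by
  have := isProbabilityMeasure_expMeasure hr
  rw [← ofReal_cdf, cdf_expMeasure_eq hr]
  split_ifs
  · exact ENNReal.ofReal_le_ofReal (by linarith [add_one_le_exp (-(r * x))])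
  · simp

lemma integrable_id_expMeasure {r : ℝ} (hr : 0 < r) : Integrable id (expMeasure r) := by
  rw [expMeasure, gammaMeasure, integrable_withDensity_iff (measurable_gammaPDF 1 r)
    (Filter.Eventually.of_forall fun _ => ENNReal.ofReal_lt_top)]
  refine IntegrableOn.integrable_of_forall_notMem_eq_zero (s := Ioi 0) ?_ fun x hx => ?_
  · have h : IntegrableOn (fun x : ℝ => r * (x ^ (1:ℝ) * rexp (-r * x ^ (1:ℝ)))) (Ioi 0) :=
      (integrableOn_rpow_mul_exp_neg_mul_rpow (by norm_num) one_pos hr).const_mul r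
    refine h.congr_fun (fun x (hx : 0 < x) => ?_) measurableSet_Ioi
    simp [gammaPDF, gammaPDFReal, hx.le, ENNReal.toReal_ofReal, mul_nonneg hr.le (exp_pos _).le]
    ring
  · rcases (Set.notMem_Ioi.1 hx).lt_or_eq with hneg | rfl
    · simp [gammaPDF_of_neg hneg]
    · simp

end ProbabilityTheory

namespace MeasureTheory

variable {Ω ι : Type*} [MeasurableSpace Ω] {μ : Measure Ω} [Countable ι]

lemma ae_summable_of_tsum_lintegral_enorm_ne_top {E : Type*} [NormedAddCommGroup E]
    [CompleteSpace E] {X : ι → Ω → E} (hX : ∀ k, AEStronglyMeasurable (X k) μ)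
    (h : ∑' k, ∫⁻ ω, ‖X k ω‖ₑ ∂μ ≠ ∞) : ∀ᵐ ω ∂μ, Summable fun k => X k ω := by
  rw [← lintegral_tsum fun k => (hX k).enorm] at h
  filter_upwards [ae_lt_top' (AEMeasurable.tsum fun k => (hX k).enorm) h] with ω hω
  exact Summable.of_norm (tsum_enorm_ne_top_iff_summable_norm.1 hω.ne)

lemma ae_summable_mul_of_map_eq {X : ι → Ω → ℝ} {ν : Measure ℝ} (hX : ∀ k, Measurable (X k))
    (hmap : ∀ k, μ.map (X k) = ν) (hν : Integrable id ν) {c : ι → ℝ}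
    (hc : Summable fun k => ‖c k‖) : ∀ᵐ ω ∂μ, Summable fun k => c k * X k ω := by
  refine ae_summable_of_tsum_lintegral_enorm_ne_top
    (fun k => ((hX k).aestronglyMeasurable.const_mul (c k))) ?_
  have hk : ∀ k, ∫⁻ ω, ‖c k * X k ω‖ₑ ∂μ = ‖c k‖ₑ * ∫⁻ x, ‖x‖ₑ ∂ν := fun k => by
    simp_rw [enorm_mul]
    rw [lintegral_const_mul _ (hX k).enorm, ← hmap k, lintegral_map measurable_enorm (hX k)]
  simp_rw [hk]
  rw [ENNReal.tsum_mul_right]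
  exact ENNReal.mul_ne_top (tsum_enorm_ne_top_iff_summable_norm.2 hc) hν.2.ne

end MeasureTheory

namespace ProbabilityTheory

theorem measure_tsum_mul_le_le_prod_of_expMeasure {Ω : Type*} [MeasurableSpace Ω]
    {μ : Measure Ω} {Z : ℕ → Ω → ℝ} (hmeas : ∀ k, Measurable (Z k)) (hindep : iIndepFun Z μ)
    {r : ℝ} (hr : 0 < r) (hexp : ∀ k, μ.map (Z k) = expMeasure r) {w : ℕ → ℝ}
    (hw : ∀ k, 0 < w k) (hws : Summable w) (a : ℝ) (s : Finset ℕ) :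
    μ {ω | ∑' k, w k * Z k ω ≤ a} ≤ ∏ k ∈ s, ENNReal.ofReal (r * (a / w k)) := by
  have hnonneg : ∀ᵐ ω ∂μ, ∀ k, 0 ≤ Z k ω := ae_all_iff.2 fun k =>
    ae_of_ae_map (hmeas k).aemeasurable (hexp k ▸ ae_nonneg_expMeasure r)
  have hsum : ∀ᵐ ω ∂μ, Summable fun k => w k * Z k ω :=
    ae_summable_mul_of_map_eq hmeas hexp (integrable_id_expMeasure hr) hws.norm
  have hsub : {ω | ∑' k, w k * Z k ω ≤ a} ≤ᵐ[μ] ⋂ k ∈ s, Z k ⁻¹' Iic (a / w k) := by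
    filter_upwards [hnonneg, hsum] with ω h0 hω (hle : ∑' k, w k * Z k ω ≤ a)
    refine mem_iInter₂.2 fun k _ => ?_
    rw [mem_preimage, mem_Iic, le_div_iff₀' (hw k)]
    exact (hω.le_tsum k fun i _ => mul_nonneg (hw i).le (h0 i)).trans hle
  calc μ {ω | ∑' k, w k * Z k ω ≤ a} ≤ μ (⋂ k ∈ s, Z k ⁻¹' Iic (a / w k)) := measure_mono_ae hsub
    _ = ∏ k ∈ s, μ (Z k ⁻¹' Iic (a / w k)) :=
      hindep.meas_biInter fun k _ => ⟨Iic _, measurableSet_Iic, rfl⟩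
    _ ≤ _ := Finset.prod_le_prod' fun k _ => by
      rw [← Measure.map_apply (hmeas k) measurableSet_Iic, hexp k]
      exact expMeasure_Iic_le hr _

end ProbabilityTheory

lemma prod_range_two_zpow_div (j : ℕ) :
    ∏ k ∈ Finset.range j, (2:ℝ) ^ (-(j:ℤ)) / 2 ^ (-((k:ℤ) + 1)) =
      2 ^ (-((j * (j - 1) / 2 : ℕ) : ℤ)) := by
  have h : ∀ k ∈ Finset.range j, (2:ℝ) ^ (-(j:ℤ)) / 2 ^ (-((k:ℤ) + 1)) = 2⁻¹ ^ (j - 1 - k) := by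
    intro k hk
    rw [← zpow_sub₀ two_ne_zero, inv_pow, ← zpow_natCast, ← zpow_neg]
    have := Finset.mem_range.1 hk
    congr 1
    omega
  rw [Finset.prod_congr rfl h, Finset.prod_pow_eq_pow_sum, Finset.sum_range_reflect (fun k => k) j,
    Finset.sum_range_id, zpow_neg, zpow_natCast, inv_pow]

theorem stmt10_general {Ω : Type*} [MeasureSpace Ω]
    (Z : ℕ → Ω → ℝ) (hmeas : ∀ k, Measurable (Z k))
    (hindep : iIndepFun Z ℙ)
    (hexp : ∀ k, Measure.map (Z k) ℙ = expMeasure 1) :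
    ∀ j : ℕ,
      ℙ {ω | (∑' k : ℕ, (2 : ℝ) ^ (-((k : ℤ) + 1)) * Z k ω) ≤ (2 : ℝ) ^ (-(j : ℤ))}
        ≤ ENNReal.ofReal ((2 : ℝ) ^ (-((j * (j - 1) / 2 : ℕ) : ℤ))) := by
  intro j
  have hw : ∀ k : ℕ, (0:ℝ) < 2 ^ (-((k:ℤ) + 1)) := fun k => zpow_pos two_pos _
  have hws : Summable fun k : ℕ => (2:ℝ) ^ (-((k:ℤ) + 1)) := by
    refine (summable_nat_add_iff 1).2 summable_geometric_two |>.congr fun k => ?_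
    rw [← Nat.cast_succ, zpow_neg, zpow_natCast, one_div, inv_pow]
  calc _ ≤ ∏ k ∈ Finset.range j, ENNReal.ofReal (1 * (2 ^ (-(j:ℤ)) / 2 ^ (-((k:ℤ) + 1)))) :=
        measure_tsum_mul_le_le_prod_of_expMeasure hmeas hindep one_pos hexp hw hws _ _
    _ = _ := by
      simp_rw [one_mul]
      rw [← ENNReal.ofReal_prod_of_nonneg fun k _ => by positivity, prod_range_two_zpow_div]

/-- For `(Z k)` i.i.d. `Exp(1)` (here `Z k` plays the role of `Z_{k+1}`) and
`S_∞ = ∑_{k=1}^∞ 2^{-k} Z_k`, we have `P(S_∞ ≤ 2^{-j}) ≤ 2^{-j(j-1)/2}` for all `j ∈ ℕ`. -/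
theorem stmt10 {Ω : Type*} [MeasureSpace Ω] [IsProbabilityMeasure (ℙ : Measure Ω)]
    (Z : ℕ → Ω → ℝ) (hmeas : ∀ k, Measurable (Z k))
    (hindep : iIndepFun Z ℙ)
    (hexp : ∀ k, Measure.map (Z k) ℙ = expMeasure 1) :
    ∀ j : ℕ,
      ℙ {ω | (∑' k : ℕ, (2 : ℝ) ^ (-((k : ℤ) + 1)) * Z k ω) ≤ (2 : ℝ) ^ (-(j : ℤ))}
        ≤ ENNReal.ofReal ((2 : ℝ) ^ (-((j * (j - 1) / 2 : ℕ) : ℤ))) :=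
  stmt10_general Z hmeas hindep hexp
end
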